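/- arXiv:2103.04488 — 5 statements merged into one kernel-verified Lean document; each statement's English description precedes it below -/
import Mathlib

section
/- For every positive integer n it holds that √(2πn) (n/e)^n e^{1/(12n+1)} < n! < √(2πn) (n/e)^n e^{1/(12n)}. -/
/-!
Robbins' argument. With `d n = log (stirlingSeq n)` and `t = 1 / (2n + 1)²`, the series of
`log ((1 + x) / (1 - x))` at `x = 1 / (2n + 1)` gives
`d n - d (n + 1) = ∑_{k ≥ 1} t^k / (2k + 1)`. Bounding `1 / (2k + 1)` above by `1 / 3`
(strictly from `k = 2` on) and below by `3^{-k}` compares this with two geometric series, giving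
`1/(12n+1) - 1/(12(n+1)+1) < d n - d (n + 1) < 1/(12n) - 1/(12(n+1))`.
So `d n - 1/(12n)` increases strictly and `d n - 1/(12n+1)` decreases strictly; both tend to
`log √π` by Stirling's formula, which traps `d n - log √π` strictly between the two corrections.
-/

open Real Filter Topology Stirling

section

variable {f g : ℕ → ℝ} {L : ℝ}

theorem lt_add_of_tendsto_of_sub_succ_lt (hf : Tendsto f atTop (𝓝 L))
    (hg : Tendsto g atTop (𝓝 0)) (h : ∀ n, f n - f (n + 1) < g n - g (n + 1)) (n : ℕ) :
    f n < L + g n := by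
  have hmono : Monotone fun k => f k - g k := monotone_nat_of_le_succ fun k => by linarith [h k]
  have hlim : Tendsto (fun k => f k - g k) atTop (𝓝 L) := by simpa using hf.sub hg
  linarith [h n, hmono.ge_of_tendsto hlim (n + 1)]

theorem add_lt_of_tendsto_of_lt_sub_succ (hf : Tendsto f atTop (𝓝 L))
    (hg : Tendsto g atTop (𝓝 0)) (h : ∀ n, g n - g (n + 1) < f n - f (n + 1)) (n : ℕ) :
    L + g n < f n := by
  have := lt_add_of_tendsto_of_sub_succ_lt (f := fun k => -f k) (g := fun k => -g k) hf.neg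
    (by simpa using hg.neg) (fun k => by linarith [h k]) n
  linarith

end

section

variable {t s : ℝ}

theorem hasSum_odd_inv_mul_pow_lt (ht0 : 0 < t) (ht1 : t < 1)
    (hs : HasSum (fun k : ℕ => 1 / (2 * ((k + 1 : ℕ) : ℝ) + 1) * t ^ (k + 1)) s) :
    s < t / (3 * (1 - t)) := by
  have hgeo : HasSum (fun k : ℕ => t ^ (k + 1) / 3) (t / (3 * (1 - t))) := by
    have h := ((hasSum_geometric_of_lt_one ht0.le ht1).mul_left t).div_const 3
    rw [show t / (3 * (1 - t)) = t * (1 - t)⁻¹ / 3 by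
      field_simp [(sub_pos.2 ht1).ne']]
    simpa only [pow_succ'] using h
  refine hasSum_lt (f := fun k : ℕ => 1 / (2 * ((k + 1 : ℕ) : ℝ) + 1) * t ^ (k + 1)) (i := 1)
    (fun k => ?_) ?_ hs hgeo
  · dsimp only
    rw [one_div_mul_eq_div]
    gcongr
    push_cast; linarith [k.cast_nonneg (α := ℝ)]
  · norm_num
    nlinarith [pow_pos ht0 2]

theorem div_three_sub_le_hasSum_odd_inv_mul_pow (ht0 : 0 < t) (ht1 : t < 1)
    (hs : HasSum (fun k : ℕ => 1 / (2 * ((k + 1 : ℕ) : ℝ) + 1) * t ^ (k + 1)) s) :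
    t / (3 - t) ≤ s := by
  have hgeo : HasSum (fun k : ℕ => (t / 3) ^ (k + 1)) (t / (3 - t)) := by
    have h :=
      (hasSum_geometric_of_lt_one (r := t / 3) (by positivity) (by linarith)).mul_left (t / 3)
    rw [show t / (3 - t) = t / 3 * (1 - t / 3)⁻¹ by field_simp]
    simpa only [pow_succ'] using h
  refine hasSum_le (fun k => ?_) hgeo hs
  have h_two_mul_add_one_le : (2 * ((k + 1 : ℕ) : ℝ) + 1) ≤ 3 ^ (k + 1) := by
    have := one_add_mul_le_pow (a := (2 : ℝ)) (by norm_num) (k + 1)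
    norm_num at this ⊢; linarith
  rw [div_pow, div_mul_eq_mul_div, one_mul]
  exact div_le_div_of_nonneg_left (by positivity) (by positivity) h_two_mul_add_one_le

end

theorem inv_two_mul_add_one_sq_lt_one {x : ℝ} (hx : 0 < x) : (1 / (2 * x + 1)) ^ 2 < 1 := by
  rw [div_pow, one_pow, div_lt_one (by positivity)]
  nlinarith

theorem log_stirlingSeq_sdiff_lt (n : ℕ) :
    log (stirlingSeq (n + 1)) - log (stirlingSeq (n + 2)) <
      1 / (12 * ((n + 1 : ℕ) : ℝ)) - 1 / (12 * ((n + 2 : ℕ) : ℝ)) := by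
  set x : ℝ := ((n + 1 : ℕ) : ℝ)
  have hx : 0 < x := by positivity
  calc _ < (1 / (2 * x + 1)) ^ 2 / (3 * (1 - (1 / (2 * x + 1)) ^ 2)) :=
        hasSum_odd_inv_mul_pow_lt (by positivity) (inv_two_mul_add_one_sq_lt_one hx)
          (log_stirlingSeq_sdiff_hasSum n)
    _ = 1 / (12 * x) - 1 / (12 * (x + 1)) := by
        rw [show 1 - (1 / (2 * x + 1)) ^ 2 = 4 * x * (x + 1) / (2 * x + 1) ^ 2 by field_simp; ring]
        field_simp
        ring
    _ = _ := by push_cast [x]; ring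

theorem sdiff_lt_log_stirlingSeq_sdiff (n : ℕ) :
    1 / (12 * ((n + 1 : ℕ) : ℝ) + 1) - 1 / (12 * ((n + 2 : ℕ) : ℝ) + 1) <
      log (stirlingSeq (n + 1)) - log (stirlingSeq (n + 2)) := by
  set x : ℝ := ((n + 1 : ℕ) : ℝ)
  have hx : 1 ≤ x := by simp [x]
  calc _ = 1 / (12 * x + 1) - 1 / (12 * (x + 1) + 1) := by push_cast [x]; ring
    _ < 1 / (12 * x ^ 2 + 12 * x + 2) := by
        rw [div_sub_div _ _ (by positivity) (by positivity),
          div_lt_div_iff₀ (by positivity) (by positivity)]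
        nlinarith
    _ = (1 / (2 * x + 1)) ^ 2 / (3 - (1 / (2 * x + 1)) ^ 2) := by
        rw [show 3 - (1 / (2 * x + 1)) ^ 2 = (12 * x ^ 2 + 12 * x + 2) / (2 * x + 1) ^ 2 by
          field_simp; ring]
        field_simp
    _ ≤ _ := div_three_sub_le_hasSum_odd_inv_mul_pow (by positivity)
          (inv_two_mul_add_one_sq_lt_one (by positivity)) (log_stirlingSeq_sdiff_hasSum n)

theorem tendsto_log_stirlingSeq_succ :
    Tendsto (fun n => log (stirlingSeq (n + 1))) atTop (𝓝 (log √π)) :=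
  (continuousAt_log (by positivity)).tendsto.comp
    (tendsto_stirlingSeq_sqrt_pi.comp (tendsto_add_atTop_nat 1))

theorem tendsto_twelve_mul_natCast_succ_atTop :
    Tendsto (fun n : ℕ => 12 * ((n + 1 : ℕ) : ℝ)) atTop atTop :=
  (tendsto_natCast_atTop_atTop.comp (tendsto_add_atTop_nat 1)).const_mul_atTop (by norm_num)

theorem log_stirlingSeq_lt (n : ℕ) :
    log (stirlingSeq (n + 1)) < log √π + 1 / (12 * ((n + 1 : ℕ) : ℝ)) :=
  lt_add_of_tendsto_of_sub_succ_lt tendsto_log_stirlingSeq_succ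
    (tendsto_const_nhds.div_atTop tendsto_twelve_mul_natCast_succ_atTop) log_stirlingSeq_sdiff_lt n

theorem lt_log_stirlingSeq (n : ℕ) :
    log √π + 1 / (12 * ((n + 1 : ℕ) : ℝ) + 1) < log (stirlingSeq (n + 1)) :=
  add_lt_of_tendsto_of_lt_sub_succ tendsto_log_stirlingSeq_succ
    (tendsto_const_nhds.div_atTop
      (tendsto_atTop_add_const_right _ 1 tendsto_twelve_mul_natCast_succ_atTop))
    sdiff_lt_log_stirlingSeq_sdiff n

theorem factorial_eq_stirling_mul_exp (n : ℕ) :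
    ((n + 1).factorial : ℝ) = √(2 * π * ((n + 1 : ℕ) : ℝ)) * (((n + 1 : ℕ) : ℝ) / exp 1) ^ (n + 1) *
      exp (log (stirlingSeq (n + 1)) - log √π) := by
  rw [exp_sub, exp_log (stirlingSeq'_pos n), exp_log (by positivity), stirlingSeq,
    mul_assoc 2 π, mul_left_comm 2 π, sqrt_mul pi_pos.le]
  field_simp

theorem stirling_bounds (n : ℕ) (hn : 1 ≤ n) :
    Real.sqrt (2 * π * n) * ((n : ℝ) / Real.exp 1) ^ n * Real.exp (1 / (12 * n + 1))
      < (Nat.factorial n : ℝ) ∧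
    (Nat.factorial n : ℝ)
      < Real.sqrt (2 * π * n) * ((n : ℝ) / Real.exp 1) ^ n * Real.exp (1 / (12 * n)) := by
  obtain ⟨m, rfl⟩ : ∃ m, n = m + 1 := ⟨n - 1, by omega⟩
  have hpos : 0 < √(2 * π * ((m + 1 : ℕ) : ℝ)) * (((m + 1 : ℕ) : ℝ) / exp 1) ^ (m + 1) := by
    positivity
  rw [factorial_eq_stirling_mul_exp]
  exact ⟨mul_lt_mul_of_pos_left (exp_lt_exp.2 (by linarith [lt_log_stirlingSeq m])) hpos,
    mul_lt_mul_of_pos_left (exp_lt_exp.2 (by linarith [log_stirlingSeq_lt m])) hpos⟩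
end

section
/- For every positive integer d and all σ, s in (0, ∞) it holds that ∫_{{x ∈ ℝ^d : ‖x‖₂ ≤ s}} e^{-σ ‖x‖₂²} dx ≥ (π/σ)^{d/2} (1 - e^{-σ s²/d})^d. -/
/-! The cube `[-t, t]^d` with `t = s / √d` lies in the ball of radius `s`, and on it the Gaussian
factorises, so the ball integral is at least `(∫_{-t}^{t} e^{-σu²} du)^d`. In one dimension
`x² ≥ t² + (x - t)²` for `x ≥ t ≥ 0` bounds the tail beyond `t` by `e^{-σt²}` times the half-line
Gaussian integral `√(π/σ)/2`, so `∫_{-t}^{t} e^{-σu²} du ≥ √(π/σ) (1 - e^{-σt²})`. -/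

open Real MeasureTheory Set

namespace EuclideanSpace

variable {ι : Type*} [Fintype ι]

theorem setIntegral_pi_prod_eq_pow (f : ℝ → ℝ) (s : Set ℝ) :
    ∫ x in {x : EuclideanSpace ℝ ι | ∀ i, x i ∈ s}, ∏ i, f (x i) =
      (∫ u in s, f u) ^ Fintype.card ι := by
  have hpi : {x : EuclideanSpace ℝ ι | ∀ i, x i ∈ s} = WithLp.ofLp ⁻¹' univ.pi fun _ => s := by
    ext x; simp
  rw [hpi, (PiLp.volume_preserving_ofLp ι).setIntegral_preimage_emb
    (MeasurableEquiv.toLp 2 (ι → ℝ)).symm.measurableEmbedding (fun y => ∏ i, f (y i)),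
    volume_pi, Measure.restrict_pi_pi, integral_fintype_prod_eq_pow]

theorem exp_neg_mul_norm_sq_eq_prod (σ : ℝ) (x : EuclideanSpace ℝ ι) :
    exp (-σ * ‖x‖ ^ 2) = ∏ i, exp (-σ * x i ^ 2) := by
  rw [real_norm_sq_eq, Finset.mul_sum, exp_sum]

theorem norm_le_sqrt_card_mul {x : EuclideanSpace ℝ ι} {t : ℝ} (ht : 0 ≤ t)
    (hx : ∀ i, |x i| ≤ t) : ‖x‖ ≤ √(Fintype.card ι) * t := by
  rw [norm_eq, ← sqrt_sq ht, ← sqrt_mul (Nat.cast_nonneg _)]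
  refine sqrt_le_sqrt ?_
  calc ∑ i, ‖x i‖ ^ 2 ≤ ∑ _i : ι, t ^ 2 := Finset.sum_le_sum fun i _ => by
        rw [norm_eq_abs]; exact pow_le_pow_left₀ (abs_nonneg _) (hx i) 2
    _ = Fintype.card ι * t ^ 2 := by simp

end EuclideanSpace

theorem Function.Even.intervalIntegral_eq_two_mul {f : ℝ → ℝ} (heven : Function.Even f)
    (hf : Continuous f) (t : ℝ) :
    ∫ x in -t..t, f x = 2 * ∫ x in (0 : ℝ)..t, f x := by
  have hleft : ∫ x in -t..0, f x = ∫ x in (0 : ℝ)..t, f x := by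
    have h := intervalIntegral.integral_comp_neg (a := 0) (b := t) f
    rw [neg_zero] at h
    rw [← h]
    exact intervalIntegral.integral_congr fun x _ => heven x
  rw [← intervalIntegral.integral_add_adjacent_intervals (b := 0) (hf.intervalIntegrable _ _)
    (hf.intervalIntegrable _ _), hleft, two_mul]

theorem integral_Ioi_exp_neg_mul_sq_le {σ t : ℝ} (hσ : 0 < σ) (ht : 0 ≤ t) :
    ∫ x in Ioi t, exp (-σ * x ^ 2) ≤ exp (-σ * t ^ 2) * (√(π / σ) / 2) := by
  have hint : Integrable (fun x : ℝ => exp (-σ * x ^ 2)) := integrable_exp_neg_mul_sq hσ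
  have hshift :
      ∫ x in Ioi t, exp (-σ * (x - t) ^ 2) = ∫ x in Ioi (0 : ℝ), exp (-σ * x ^ 2) := by
    have h := (measurePreserving_add_right volume t).setIntegral_preimage_emb
      (MeasurableEquiv.addRight t).measurableEmbedding (fun x => exp (-σ * (x - t) ^ 2)) (Ioi t)
    simp only [preimage_add_const_Ioi, sub_self, add_sub_cancel_right] at h
    exact h.symm
  calc ∫ x in Ioi t, exp (-σ * x ^ 2)
      ≤ ∫ x in Ioi t, exp (-σ * t ^ 2) * exp (-σ * (x - t) ^ 2) := by
        refine setIntegral_mono_on hint.integrableOn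
          ((hint.comp_sub_right t).const_mul _).integrableOn measurableSet_Ioi fun x hx => ?_
        rw [← exp_add]
        exact exp_le_exp.2 (by nlinarith [mul_nonneg (mul_nonneg hσ.le ht) (sub_nonneg.2 hx.le)])
    _ = exp (-σ * t ^ 2) * (√(π / σ) / 2) := by
        rw [integral_const_mul, hshift, integral_gaussian_Ioi]

theorem sqrt_mul_one_sub_exp_le_integral_Icc_gaussian {σ t : ℝ} (hσ : 0 < σ) (ht : 0 ≤ t) :
    √(π / σ) * (1 - exp (-σ * t ^ 2)) ≤ ∫ x in Icc (-t) t, exp (-σ * x ^ 2) := by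
  have hcont : Continuous fun x : ℝ => exp (-σ * x ^ 2) := by fun_prop
  have hhalf : ∫ x in (0 : ℝ)..t, exp (-σ * x ^ 2) =
      √(π / σ) / 2 - ∫ x in Ioi t, exp (-σ * x ^ 2) := by
    rw [← intervalIntegral.integral_Ioi_sub_Ioi (integrable_exp_neg_mul_sq hσ).integrableOn ht,
      integral_gaussian_Ioi]
  rw [integral_Icc_eq_integral_Ioc, ← intervalIntegral.integral_of_le (by linarith),
    Function.Even.intervalIntegral_eq_two_mul (fun x => by simp) hcont t, hhalf]
  linarith [integral_Ioi_exp_neg_mul_sq_le hσ ht]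

theorem gaussian_ball_lower_general (d : ℕ) (σ s : ℝ) (hσ : 0 < σ) (hs : 0 < s) :
    (∫ x in {y : EuclideanSpace ℝ (Fin d) | ‖y‖ ≤ s}, Real.exp (-σ * ‖x‖ ^ 2))
      ≥ (π / σ) ^ ((d : ℝ) / 2) * (1 - Real.exp (-σ * s ^ 2 / d)) ^ d := by
  set t := s / √d
  have ht : 0 ≤ t := by positivity
  have hcube : {x : EuclideanSpace ℝ (Fin d) | ∀ i, x i ∈ Icc (-t) t} ⊆ {y | ‖y‖ ≤ s} := by
    intro x hx
    calc ‖x‖ ≤ √(Fintype.card (Fin d)) * t :=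
          EuclideanSpace.norm_le_sqrt_card_mul ht fun i => abs_le.2 (hx i)
      _ = s * (√d / √d) := by rw [Fintype.card_fin, mul_div_left_comm]
      _ ≤ s := mul_le_of_le_one_right hs.le (div_self_le_one _)
  have hball : IntegrableOn (fun x : EuclideanSpace ℝ (Fin d) => exp (-σ * ‖x‖ ^ 2))
      {y | ‖y‖ ≤ s} := by
    rw [show {y : EuclideanSpace ℝ (Fin d) | ‖y‖ ≤ s} = Metric.closedBall 0 s by ext; simp]
    exact ContinuousOn.integrableOn_compact (isCompact_closedBall 0 s) (by fun_prop)
  have hexp_le_one : exp (-σ * t ^ 2) ≤ 1 := exp_le_one_iff.2 (by nlinarith [sq_nonneg t])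
  rw [ge_iff_le]
  calc (π / σ) ^ ((d : ℝ) / 2) * (1 - exp (-σ * s ^ 2 / d)) ^ d
      = (√(π / σ) * (1 - exp (-σ * t ^ 2))) ^ d := by
        rw [rpow_div_two_eq_sqrt _ (by positivity), rpow_natCast, mul_pow, div_pow,
          sq_sqrt d.cast_nonneg, mul_div_assoc]
    _ ≤ (∫ u in Icc (-t) t, exp (-σ * u ^ 2)) ^ d :=
        pow_le_pow_left₀ (mul_nonneg (sqrt_nonneg _) (sub_nonneg.2 hexp_le_one))
          (sqrt_mul_one_sub_exp_le_integral_Icc_gaussian hσ ht) d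
    _ = ∫ x in {x : EuclideanSpace ℝ (Fin d) | ∀ i, x i ∈ Icc (-t) t},
          exp (-σ * ‖x‖ ^ 2) := by
        simp_rw [EuclideanSpace.exp_neg_mul_norm_sq_eq_prod]
        rw [EuclideanSpace.setIntegral_pi_prod_eq_pow (fun u => exp (-σ * u ^ 2)),
          Fintype.card_fin]
    _ ≤ _ :=
        setIntegral_mono_set hball (ae_of_all _ fun _ => (exp_pos _).le) hcube.eventuallyLE

theorem gaussian_ball_lower (d : ℕ) (hd : 1 ≤ d) (σ s : ℝ) (hσ : 0 < σ) (hs : 0 < s) :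
    (∫ x in {y : EuclideanSpace ℝ (Fin d) | ‖y‖ ≤ s}, Real.exp (-σ * ‖x‖ ^ 2))
      ≥ (π / σ) ^ ((d : ℝ) / 2) * (1 - Real.exp (-σ * s ^ 2 / d)) ^ d :=
  gaussian_ball_lower_general d σ s hσ hs
end

section
/- For every positive integer d and all σ, s in (0, ∞) it holds that ∫_{{x ∈ ℝ^d : ‖x‖₂ ≥ s}} (σ/π)^{d/2} e^{-σ ‖x‖₂²} dx ≤ d e^{-σ s²/d}. -/
open Real MeasureTheory Set

/-!
If `‖x‖ ≥ s` then some coordinate satisfies `|xᵢ| ≥ a := s / √d`. The Gaussian density factors over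
the coordinates, so a union bound reduces the claim to the one-dimensional estimate
`∫_{|t| ≥ a} √(σ/π) e^{-σt²} dt ≤ e^{-σa²}`. For that, `t² ≥ a² + (t - a)²` when `t ≥ a ≥ 0`, so
shifting the half-line `[a, ∞)` to `[0, ∞)` costs at most the factor `e^{-σa²}`, and each half-line
carries mass `1/2`.
-/

theorem setIntegral_le_sum_of_subset_iUnion {α ι : Type*} [MeasurableSpace α] [Fintype ι]
    {μ : Measure α} {f : α → ℝ} (hf₀ : 0 ≤ f) (hf : Integrable f μ) {s : Set α} {t : ι → Set α}
    (hst : s ⊆ ⋃ i, t i) : ∫ x in s, f x ∂μ ≤ ∑ i, ∫ x in t i, f x ∂μ := by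
  have hμ : μ.restrict s ≤ ∑ i, μ.restrict (t i) :=
    (Measure.restrict_mono hst le_rfl).trans <|
      Measure.restrict_iUnion_le.trans (Measure.sum_fintype _).le
  calc ∫ x in s, f x ∂μ ≤ ∫ x, f x ∂(∑ i, μ.restrict (t i)) :=
        integral_mono_measure hμ (.of_forall hf₀)
          (integrable_finsetSum_measure.2 fun i _ => hf.integrableOn)
    _ = ∑ i, ∫ x in t i, f x ∂μ := integral_finsetSum_measure fun i _ => hf.integrableOn

theorem EuclideanSpace.exists_norm_le_sqrt_card_mul_abs {ι : Type*} [Fintype ι] [Nonempty ι]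
    (x : EuclideanSpace ℝ ι) : ∃ i, ‖x‖ ≤ √(Fintype.card ι) * |x i| := by
  obtain ⟨i, -, hi⟩ := Finset.exists_max_image Finset.univ (fun j => |x j|) Finset.univ_nonempty
  refine ⟨i, ?_⟩
  rw [EuclideanSpace.norm_eq, ← sqrt_sq (abs_nonneg (x i)), ← sqrt_mul (Nat.cast_nonneg _)]
  refine sqrt_le_sqrt ?_
  calc ∑ j, ‖x j‖ ^ 2 ≤ ∑ _j : ι, |x i| ^ 2 := Finset.sum_le_sum fun j _ => by
        rw [norm_eq_abs]; exact pow_le_pow_left₀ (abs_nonneg _) (hi j (Finset.mem_univ j)) 2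
    _ = Fintype.card ι * |x i| ^ 2 := by simp

theorem EuclideanSpace.gaussian_density_eq_prod {ι : Type*} [Fintype ι] {σ : ℝ} (hσ : 0 ≤ σ)
    (x : EuclideanSpace ℝ ι) :
    (σ / π) ^ ((Fintype.card ι : ℝ) / 2) * exp (-σ * ‖x‖ ^ 2)
      = ∏ j, √(σ / π) * exp (-σ * x j ^ 2) := by
  rw [Finset.prod_mul_distrib, Finset.prod_const, ← exp_sum, ← Finset.mul_sum,
    EuclideanSpace.norm_sq_eq, sqrt_eq_rpow, ← rpow_natCast, ← rpow_mul (by positivity)]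
  simp [div_eq_inv_mul, mul_comm]

theorem integral_pi_apply_mem_prod {ι : Type*} [Fintype ι] {f : ℝ → ℝ}
    (hf : ∫ t, f t = 1) (i : ι) {B : Set ℝ} (hB : MeasurableSet B) :
    ∫ x in {x : ι → ℝ | x i ∈ B}, ∏ j, f (x j) = ∫ t in B, f t := by
  classical
  set A : Set (ι → ℝ) := {x | x i ∈ B}
  have hA : MeasurableSet A := measurable_pi_apply i hB
  set g : ι → ℝ → ℝ := Function.update (fun _ => f) i (B.indicator f)
  have hind : A.indicator (fun x => ∏ j, f (x j)) = fun x => ∏ j, g j (x j) := by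
    ext x
    by_cases hx : x i ∈ B
    · rw [indicator_of_mem (show x ∈ A from hx)]
      refine Finset.prod_congr rfl fun j _ => ?_
      rcases eq_or_ne j i with rfl | hji <;> simp_all [g]
    · rw [indicator_of_notMem (show x ∉ A from hx),
        Finset.prod_eq_zero (Finset.mem_univ i) (by simp [g, hx])]
  rw [← integral_indicator hA, hind, integral_fintype_prod_volume_eq_prod,
    Finset.prod_eq_single_of_mem i (Finset.mem_univ i) fun j _ hji => by simp [g, hji, hf]]
  simp [g, integral_indicator hB]

theorem EuclideanSpace.integral_apply_mem_prod {ι : Type*} [Fintype ι] {f : ℝ → ℝ}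
    (hf : ∫ t, f t = 1) (i : ι) {B : Set ℝ} (hB : MeasurableSet B) :
    ∫ x in {x : EuclideanSpace ℝ ι | x i ∈ B}, ∏ j, f (x j) = ∫ t in B, f t := by
  rw [← integral_pi_apply_mem_prod hf i hB]
  exact ((PiLp.volume_preserving_toLp ι).setIntegral_preimage_emb
    (MeasurableEquiv.toLp 2 _).measurableEmbedding (fun x => ∏ j, f (x j)) _).symm

theorem EuclideanSpace.integrable_prod_apply {ι : Type*} [Fintype ι] {f : ℝ → ℝ}
    (hf : Integrable f) : Integrable fun x : EuclideanSpace ℝ ι => ∏ j, f (x j) :=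
  (PiLp.volume_preserving_ofLp ι).integrable_comp_of_integrable
    (Integrable.fintype_prod (f := fun _ => f) fun _ => hf)

theorem integral_gaussian_density {σ : ℝ} (hσ : 0 < σ) :
    ∫ t, √(σ / π) * exp (-σ * t ^ 2) = 1 := by
  rw [integral_const_mul, integral_gaussian, ← sqrt_mul (by positivity), div_mul_div_comm,
    mul_comm σ, div_self (by positivity), sqrt_one]

theorem integral_Ici_gaussian_le {σ a : ℝ} (hσ : 0 < σ) (ha : 0 ≤ a) :
    ∫ t in Ici a, exp (-σ * t ^ 2) ≤ exp (-σ * a ^ 2) * ∫ t in Ici 0, exp (-σ * t ^ 2) := by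
  have hshift : ∫ t in Ici a, exp (-σ * (t - a) ^ 2) = ∫ t in Ici 0, exp (-σ * t ^ 2) := by
    simpa only [preimage_sub_const_Ici, zero_add] using
      (measurePreserving_sub_right volume a).setIntegral_preimage_emb
        (measurableEmbedding_subRight a) (fun t => exp (-σ * t ^ 2)) (Ici 0)
  rw [← hshift, ← integral_const_mul]
  refine setIntegral_mono_on (integrable_exp_neg_mul_sq hσ).integrableOn
    (((integrable_exp_neg_mul_sq hσ).comp_sub_right a).const_mul _).integrableOn
    measurableSet_Ici fun t (ht : a ≤ t) => ?_
  rw [← exp_add, exp_le_exp]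
  nlinarith [mul_nonneg hσ.le (mul_nonneg ha (sub_nonneg.2 ht))]

theorem integral_abs_ge_gaussian_density_le {σ a : ℝ} (hσ : 0 < σ) (ha : 0 < a) :
    ∫ t in {t | a ≤ |t|}, √(σ / π) * exp (-σ * t ^ 2) ≤ exp (-σ * a ^ 2) := by
  have hsplit : {t : ℝ | a ≤ |t|} = Iic (-a) ∪ Ici a := by
    ext t
    simp only [mem_ofPred_eq, mem_union, mem_Iic, mem_Ici, le_abs, le_neg]
    tauto
  have hsymm : ∫ t in Iic (-a), exp (-σ * t ^ 2) = ∫ t in Ici a, exp (-σ * t ^ 2) := by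
    rw [← integral_comp_neg_Ioi, integral_Ici_eq_integral_Ioi]
    simp
  have hhalf : ∫ t in Ici 0, exp (-σ * t ^ 2) = √(π / σ) / 2 := by
    rw [integral_Ici_eq_integral_Ioi, integral_gaussian_Ioi]
  have hint := (integrable_exp_neg_mul_sq hσ).integrableOn (s := Iic (-a))
  rw [integral_const_mul, hsplit, setIntegral_union (Iic_disjoint_Ici.2 (by linarith))
    measurableSet_Ici hint (integrable_exp_neg_mul_sq hσ).integrableOn, hsymm]
  calc √(σ / π) * ((∫ t in Ici a, exp (-σ * t ^ 2)) + ∫ t in Ici a, exp (-σ * t ^ 2))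
      ≤ √(σ / π) * (2 * (exp (-σ * a ^ 2) * (√(π / σ) / 2))) := by
        rw [← hhalf]
        have := integral_Ici_gaussian_le hσ ha.le
        gcongr
        linarith
    _ = exp (-σ * a ^ 2) := by
        have hone : √(σ / π) * √(π / σ) = 1 := by
          rw [← sqrt_mul (by positivity), div_mul_div_comm, mul_comm σ, div_self (by positivity),
            sqrt_one]
        linear_combination exp (-σ * a ^ 2) * hone

theorem gaussian_tail_ball_upper (d : ℕ) (hd : 1 ≤ d) (σ s : ℝ) (hσ : 0 < σ) (hs : 0 < s) :
    (∫ x in {y : EuclideanSpace ℝ (Fin d) | s ≤ ‖y‖},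
        (σ / π) ^ ((d : ℝ) / 2) * Real.exp (-σ * ‖x‖ ^ 2))
      ≤ d * Real.exp (-σ * s ^ 2 / d) := by
  have : Nonempty (Fin d) := ⟨⟨0, hd⟩⟩
  have hd₀ : (0 : ℝ) < d := by exact_mod_cast hd
  set a := s / √d
  have ha : 0 < a := by positivity
  have hcover : {y : EuclideanSpace ℝ (Fin d) | s ≤ ‖y‖} ⊆ ⋃ i, {y | y i ∈ {t | a ≤ |t|}} := by
    intro y (hy : s ≤ ‖y‖)
    obtain ⟨i, hi⟩ := EuclideanSpace.exists_norm_le_sqrt_card_mul_abs y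
    rw [Fintype.card_fin] at hi
    exact mem_iUnion.2 ⟨i, (div_le_iff₀' (by positivity)).2 (hy.trans hi)⟩
  calc (∫ x in {y : EuclideanSpace ℝ (Fin d) | s ≤ ‖y‖},
        (σ / π) ^ ((d : ℝ) / 2) * Real.exp (-σ * ‖x‖ ^ 2))
      = ∫ y in {y : EuclideanSpace ℝ (Fin d) | s ≤ ‖y‖}, ∏ j, √(σ / π) * exp (-σ * y j ^ 2) := by
        simp_rw [← EuclideanSpace.gaussian_density_eq_prod hσ.le, Fintype.card_fin]
    _ ≤ ∑ i, ∫ y in {y : EuclideanSpace ℝ (Fin d) | y i ∈ {t | a ≤ |t|}},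
          ∏ j, √(σ / π) * exp (-σ * y j ^ 2) :=
        setIntegral_le_sum_of_subset_iUnion
          (fun y => Finset.prod_nonneg fun j _ => by positivity)
          (EuclideanSpace.integrable_prod_apply ((integrable_exp_neg_mul_sq hσ).const_mul _))
          hcover
    _ = ∑ _i : Fin d, ∫ t in {t | a ≤ |t|}, √(σ / π) * exp (-σ * t ^ 2) := by
        simp_rw [EuclideanSpace.integral_apply_mem_prod (integral_gaussian_density hσ) _
          (isClosed_le continuous_const continuous_abs).measurableSet]
    _ ≤ ∑ _i : Fin d, exp (-σ * a ^ 2) :=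
        Finset.sum_le_sum fun _ _ => integral_abs_ge_gaussian_density_le hσ ha
    _ = d * exp (-σ * s ^ 2 / d) := by
        rw [Finset.sum_const, Finset.card_univ, Fintype.card_fin, nsmul_eq_mul, div_pow,
          sq_sqrt hd₀.le, mul_div_assoc]
end

section
/- For every integer d ≥ 3 and all β, σ in (0, ∞) it holds that ∫_{{x ∈ ℝ^d : √(d(1+β))/√(2σ) ≤ ‖x‖₂ ≤ d√(1+β)/√(2σ)}} (σ/π)^{d/2} e^{-σ‖x‖₂²} dx ≤ d ((1+β)/e^β)^{d/2}. -/
/-! Chernoff bound. On `{r ≤ ‖x‖}` and for `0 ≤ t < σ` one has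
`e^{-σ‖x‖²} ≤ e^{-t r²} e^{-(σ-t)‖x‖²}`, and the right-hand side integrates over the whole space
to `e^{-t r²} (π/(σ-t))^{n/2}`. For the normalized Gaussian, `t = σβ/(1+β)` and
`r² = n(1+β)/(2σ)` turn this into `((1+β)/e^β)^{n/2}`; only the inner radius of the annulus
matters, and the extra factor `d ≥ 1` is slack. -/

open Real MeasureTheory

section GaussianTail

variable {V : Type*} [NormedAddCommGroup V] [InnerProductSpace ℝ V] [FiniteDimensional ℝ V]
  [MeasurableSpace V] [BorelSpace V]

theorem integrable_rexp_neg_mul_sq_norm {b : ℝ} (hb : 0 < b) :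
    Integrable (fun v : V => rexp (-b * ‖v‖ ^ 2)) :=
  Integrable.of_integral_ne_zero <| by
    rw [GaussianFourier.integral_rexp_neg_mul_sq_norm hb]
    positivity

theorem rexp_neg_mul_sq_le_of_le {σ t r s : ℝ} (ht : 0 ≤ t) (hr : 0 ≤ r) (hrs : r ≤ s) :
    rexp (-σ * s ^ 2) ≤ rexp (-(t * r ^ 2)) * rexp (-(σ - t) * s ^ 2) := by
  rw [← Real.exp_add, Real.exp_le_exp]
  nlinarith [mul_le_mul_of_nonneg_left (pow_le_pow_left₀ hr hrs 2) ht]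

theorem setIntegral_tail_rexp_neg_mul_sq_norm_le {σ t r : ℝ} (ht : 0 ≤ t) (htσ : t < σ)
    (hr : 0 ≤ r) :
    ∫ x in {x : V | r ≤ ‖x‖}, rexp (-σ * ‖x‖ ^ 2)
      ≤ rexp (-(t * r ^ 2)) * (π / (σ - t)) ^ (Module.finrank ℝ V / 2 : ℝ) := by
  have hσt : 0 < σ - t := sub_pos.2 htσ
  have hg := (integrable_rexp_neg_mul_sq_norm (V := V) hσt).const_mul (rexp (-(t * r ^ 2)))
  calc ∫ x in {x : V | r ≤ ‖x‖}, rexp (-σ * ‖x‖ ^ 2)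
      ≤ ∫ x in {x : V | r ≤ ‖x‖}, rexp (-(t * r ^ 2)) * rexp (-(σ - t) * ‖x‖ ^ 2) :=
        setIntegral_mono_on (integrable_rexp_neg_mul_sq_norm (by linarith)).integrableOn
          hg.integrableOn (measurableSet_le measurable_const measurable_norm)
          fun _ hx => rexp_neg_mul_sq_le_of_le ht hr hx
    _ ≤ ∫ x, rexp (-(t * r ^ 2)) * rexp (-(σ - t) * ‖x‖ ^ 2) :=
        setIntegral_le_integral hg (Filter.Eventually.of_forall fun _ => by positivity)
    _ = rexp (-(t * r ^ 2)) * (π / (σ - t)) ^ (Module.finrank ℝ V / 2 : ℝ) := by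
        rw [integral_const_mul, GaussianFourier.integral_rexp_neg_mul_sq_norm hσt]

theorem setIntegral_tail_gaussian_le {σ β : ℝ} (hσ : 0 < σ) (hβ : 0 ≤ β) :
    ∫ x in {x : V | √(Module.finrank ℝ V * (1 + β)) / √(2 * σ) ≤ ‖x‖},
        (σ / π) ^ (Module.finrank ℝ V / 2 : ℝ) * rexp (-σ * ‖x‖ ^ 2)
      ≤ ((1 + β) / rexp β) ^ (Module.finrank ℝ V / 2 : ℝ) := by
  set n : ℝ := (Module.finrank ℝ V : ℝ)
  set r := √(n * (1 + β)) / √(2 * σ)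
  set t := σ * β / (1 + β) with ht_def
  have h1β : 0 < 1 + β := by linarith
  have ht : 0 ≤ t := by positivity
  have hσt : σ - t = σ / (1 + β) := by rw [ht_def]; field_simp; ring
  have htr : t * r ^ 2 = β * (n / 2) := by
    rw [ht_def, div_pow, sq_sqrt (by positivity), sq_sqrt (by positivity)]
    field_simp
  rw [integral_const_mul]
  calc (σ / π) ^ (n / 2) * ∫ x in {x : V | r ≤ ‖x‖}, rexp (-σ * ‖x‖ ^ 2)
      ≤ (σ / π) ^ (n / 2) * (rexp (-(t * r ^ 2)) * (π / (σ - t)) ^ (n / 2)) :=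
        mul_le_mul_of_nonneg_left
          (setIntegral_tail_rexp_neg_mul_sq_norm_le ht (by rw [← sub_pos, hσt]; positivity)
            (by positivity)) (by positivity)
    _ = ((1 + β) / rexp β) ^ (n / 2) := by
        rw [htr, hσt, Real.div_rpow h1β.le (exp_pos β).le, ← Real.exp_mul, Real.exp_neg,
          mul_left_comm, ← Real.mul_rpow (by positivity) (by positivity)]
        field_simp

end GaussianTail

theorem gaussian_annulus_upper (d : ℕ) (hd : 3 ≤ d) (β σ : ℝ) (hβ : 0 < β) (hσ : 0 < σ) :
    (∫ x in {y : EuclideanSpace ℝ (Fin d) |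
        Real.sqrt (d * (1 + β)) / Real.sqrt (2 * σ) ≤ ‖y‖ ∧
          ‖y‖ ≤ d * Real.sqrt (1 + β) / Real.sqrt (2 * σ)},
        (σ / π) ^ ((d : ℝ) / 2) * Real.exp (-σ * ‖x‖ ^ 2))
      ≤ d * ((1 + β) / Real.exp β) ^ ((d : ℝ) / 2) := by
  have hgauss : Integrable fun x : EuclideanSpace ℝ (Fin d) =>
      (σ / π) ^ ((d : ℝ) / 2) * Real.exp (-σ * ‖x‖ ^ 2) :=
    (integrable_rexp_neg_mul_sq_norm (V := EuclideanSpace ℝ (Fin d)) hσ).const_mul _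
  have hd1 : (1 : ℝ) ≤ d := by exact_mod_cast (by omega : 1 ≤ d)
  calc _ ≤ ∫ x in {y : EuclideanSpace ℝ (Fin d) | √(d * (1 + β)) / √(2 * σ) ≤ ‖y‖},
          (σ / π) ^ ((d : ℝ) / 2) * Real.exp (-σ * ‖x‖ ^ 2) :=
        setIntegral_mono_set hgauss.integrableOn
          (Filter.Eventually.of_forall fun _ => by positivity)
          (Filter.Eventually.of_forall fun _ hx => hx.1)
    _ ≤ ((1 + β) / Real.exp β) ^ ((d : ℝ) / 2) := by
        simpa only [finrank_euclideanSpace_fin] using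
          setIntegral_tail_gaussian_le (V := EuclideanSpace ℝ (Fin d)) hσ hβ.le
    _ ≤ d * ((1 + β) / Real.exp β) ^ ((d : ℝ) / 2) := le_mul_of_one_le_left (by positivity) hd1
end

section
/- For all σ, s in (0, ∞) it holds that ∫_s^∞ e^{-σ x²} dx ≥ e^{-σ s²} / (s^{-1} + 2σs). -/
/-! The function `g x = -exp (-σ x²) / (2σx)` has derivative `exp (-σ x²) (1 + 1/(2σx²))` and
tends to `0` at infinity, so the integral of this derivative over `(s, ∞)` is `exp (-σ s²) / (2σs)`.
For `x ≥ s` the derivative is at most `(1 + 1/(2σs²)) exp (-σ x²)`, and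
`2σs (1 + 1/(2σs²)) = s⁻¹ + 2σs`. -/

open Real MeasureTheory Filter Set Topology

lemma hasDerivAt_neg_exp_neg_mul_sq_div {σ x : ℝ} (hσ : σ ≠ 0) (hx : x ≠ 0) :
    HasDerivAt (fun x => -exp (-σ * x ^ 2) / (2 * σ * x))
      (exp (-σ * x ^ 2) * (1 + (2 * σ * x ^ 2)⁻¹)) x := by
  have hexp : HasDerivAt (fun x => -exp (-σ * x ^ 2)) (exp (-σ * x ^ 2) * (2 * σ * x)) x :=
    (((hasDerivAt_pow 2 x).const_mul (-σ)).exp.neg).congr_deriv (by simp; ring)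
  refine (hexp.div ((hasDerivAt_id' x).const_mul (2 * σ)) (by simp [hσ, hx])).congr_deriv ?_
  field_simp
  ring

lemma tendsto_neg_exp_neg_mul_sq_div_atTop {σ : ℝ} (hσ : 0 < σ) :
    Tendsto (fun x => -exp (-σ * x ^ 2) / (2 * σ * x)) atTop (𝓝 0) := by
  have hexp : Tendsto (fun x : ℝ => -exp (-σ * x ^ 2)) atTop (𝓝 0) := by
    simpa using (tendsto_exp_atBot.comp
      ((tendsto_pow_atTop two_ne_zero).const_mul_atTop_of_neg (neg_lt_zero.mpr hσ))).neg
  have hinv : Tendsto (fun x : ℝ => (2 * σ * x)⁻¹) atTop (𝓝 0) :=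
    tendsto_inv_atTop_zero.comp (tendsto_id.const_mul_atTop (by positivity))
  simpa [div_eq_mul_inv] using hexp.mul hinv

lemma integrableOn_Ioi_exp_neg_mul_sq_mul_one_add_inv {σ s : ℝ} (hσ : 0 < σ) (hs : 0 < s) :
    IntegrableOn (fun x => exp (-σ * x ^ 2) * (1 + (2 * σ * x ^ 2)⁻¹)) (Ioi s) :=
  integrableOn_Ioi_deriv_of_nonneg'
    (fun _ hx => hasDerivAt_neg_exp_neg_mul_sq_div hσ.ne' (hs.trans_le hx).ne')
    (fun _ _ => by positivity) (tendsto_neg_exp_neg_mul_sq_div_atTop hσ)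

lemma integral_Ioi_exp_neg_mul_sq_mul_one_add_inv {σ s : ℝ} (hσ : 0 < σ) (hs : 0 < s) :
    ∫ x in Ioi s, exp (-σ * x ^ 2) * (1 + (2 * σ * x ^ 2)⁻¹) =
      exp (-σ * s ^ 2) / (2 * σ * s) := by
  rw [integral_Ioi_of_hasDerivAt_of_nonneg'
    (fun _ hx => hasDerivAt_neg_exp_neg_mul_sq_div hσ.ne' (hs.trans_le hx).ne')
    (fun _ _ => by positivity) (tendsto_neg_exp_neg_mul_sq_div_atTop hσ)]
  ring

lemma integral_Ioi_exp_neg_mul_sq_mul_one_add_inv_le {σ s : ℝ} (hσ : 0 < σ) (hs : 0 < s) :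
    ∫ x in Ioi s, exp (-σ * x ^ 2) * (1 + (2 * σ * x ^ 2)⁻¹) ≤
      (1 + (2 * σ * s ^ 2)⁻¹) * ∫ x in Ioi s, exp (-σ * x ^ 2) := by
  rw [← integral_const_mul]
  refine setIntegral_mono_on (integrableOn_Ioi_exp_neg_mul_sq_mul_one_add_inv hσ hs)
    ((integrable_exp_neg_mul_sq hσ).integrableOn.const_mul _) measurableSet_Ioi fun x hx => ?_
  rw [mul_comm]
  gcongr
  exact hx.le

theorem gaussian_tail_lower (σ s : ℝ) (hσ : 0 < σ) (hs : 0 < s) :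
    (∫ x in Set.Ioi s, Real.exp (-σ * x ^ 2)) ≥ Real.exp (-σ * s ^ 2) / (s⁻¹ + 2 * σ * s) := by
  have hc : 0 < 1 + (2 * σ * s ^ 2)⁻¹ := by positivity
  calc Real.exp (-σ * s ^ 2) / (s⁻¹ + 2 * σ * s)
      = (1 + (2 * σ * s ^ 2)⁻¹)⁻¹ * (exp (-σ * s ^ 2) / (2 * σ * s)) := by
        field_simp
        ring
    _ = (1 + (2 * σ * s ^ 2)⁻¹)⁻¹ *
          ∫ x in Ioi s, exp (-σ * x ^ 2) * (1 + (2 * σ * x ^ 2)⁻¹) := by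
        rw [integral_Ioi_exp_neg_mul_sq_mul_one_add_inv hσ hs]
    _ ≤ ∫ x in Ioi s, exp (-σ * x ^ 2) := by
        rw [inv_mul_le_iff₀ hc]
        exact integral_Ioi_exp_neg_mul_sq_mul_one_add_inv_le hσ hs
end
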